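/- If K ⊆ ℝ^d is Capra-convex, then K is a cone, K ∪ {0} is closed, and K ∩ {0} = cl conv(ρ(K)) ∩ {0} (i.e., 0 ∈ K if and only if 0 ∈ cl conv(ρ(K))). -/

import Mathlib

open Classical in
noncomputable def radProj {d : ℕ} (N : EuclideanSpace ℝ (Fin d) → ℝ)
    (x : EuclideanSpace ℝ (Fin d)) : EuclideanSpace ℝ (Fin d) :=
  if x = 0 then 0 else (N x)⁻¹ • x

noncomputable def capraConj {d : ℕ} (N : EuclideanSpace ℝ (Fin d) → ℝ)
    (f : EuclideanSpace ℝ (Fin d) → EReal) (y : EuclideanSpace ℝ (Fin d)) : EReal :=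
  ⨆ x : EuclideanSpace ℝ (Fin d), ((inner ℝ (radProj N x) y : ℝ) : EReal) - f x

noncomputable def capraBiconj {d : ℕ} (N : EuclideanSpace ℝ (Fin d) → ℝ)
    (f : EuclideanSpace ℝ (Fin d) → EReal) (x : EuclideanSpace ℝ (Fin d)) : EReal :=
  ⨆ y : EuclideanSpace ℝ (Fin d), ((inner ℝ (radProj N x) y : ℝ) : EReal) - capraConj N f y

open Classical in
noncomputable def ind {d : ℕ} (X : Set (EuclideanSpace ℝ (Fin d)))
    (x : EuclideanSpace ℝ (Fin d)) : EReal :=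
  if x ∈ X then 0 else ⊤

def IsCapraConvex {d : ℕ} (N : EuclideanSpace ℝ (Fin d) → ℝ)
    (X : Set (EuclideanSpace ℝ (Fin d))) : Prop :=
  ind X = capraBiconj N (ind X)

def coneHull {d : ℕ} (A : Set (EuclideanSpace ℝ (Fin d))) : Set (EuclideanSpace ℝ (Fin d)) :=
  {y | ∃ a ∈ A, ∃ l : ℝ, 0 < l ∧ y = l • a}

/-!
Capra-convexity of `K` says that `x ∈ K` exactly when `⟪ρ x, y⟫ ≤ sup_{a ∈ ρ(K)} ⟪a, y⟫` for
every `y`. By Hahn–Banach separation these inequalities cut out the closed convex hull of `ρ(K)`,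
so `x ∈ K ↔ ρ x ∈ cl conv ρ(K)`. The three claims follow because `ρ` is invariant under positive
scalings, `ρ 0 = 0`, and `ρ` is continuous away from `0`.
-/

open Set

theorem Seminorm.continuous_of_finiteDimensional {E : Type*} [NormedAddCommGroup E]
    [NormedSpace ℝ E] [FiniteDimensional ℝ E] (p : Seminorm ℝ E) : Continuous p :=
  p.convexOn.locallyLipschitz.continuous

theorem mem_closure_convexHull_iff_forall_inner_le_iSup {E : Type*} [NormedAddCommGroup E]
    [InnerProductSpace ℝ E] [CompleteSpace E] {A : Set E} {p : E} :
    p ∈ closure (convexHull ℝ A) ↔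
      ∀ y, ((inner ℝ p y : ℝ) : EReal) ≤ ⨆ a ∈ A, ((inner ℝ a y : ℝ) : EReal) := by
  constructor
  · intro hp y
    have hclosed : IsClosed {z : E | ((inner ℝ z y : ℝ) : EReal) ≤
        ⨆ a ∈ A, ((inner ℝ a y : ℝ) : EReal)} :=
      isClosed_le (continuous_coe_real_ereal.comp (continuous_id.inner continuous_const))
        continuous_const
    refine closure_minimal (fun z hz => ?_) hclosed hp
    have hlin : ConvexOn ℝ univ fun z : E => inner ℝ z y :=
      ((innerSL ℝ y).toLinearMap.convexOn convex_univ).congr fun z _ => real_inner_comm z y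
    obtain ⟨a, ha, hza⟩ := hlin.exists_ge_of_mem_convexHull (subset_univ A) hz
    exact (EReal.coe_le_coe_iff.2 hza).trans (le_biSup (fun a => ((inner ℝ a y : ℝ) : EReal)) ha)
  · intro h
    by_contra hp
    obtain ⟨f, u, hfA, hfp⟩ :=
      geometric_hahn_banach_closed_point (convex_convexHull ℝ A).closure isClosed_closure hp
    set y := (InnerProductSpace.toDual ℝ E).symm f
    have hy : ∀ z, inner ℝ z y = f z := fun z => by
      rw [real_inner_comm, InnerProductSpace.toDual_symm_apply]
    have hsup : ⨆ a ∈ A, ((inner ℝ a y : ℝ) : EReal) ≤ u := iSup₂_le fun a ha => by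
      rw [hy]
      exact_mod_cast (hfA a (subset_closure (subset_convexHull ℝ A ha))).le
    have hpu : f p ≤ u := by
      have := (h y).trans hsup
      rwa [hy, EReal.coe_le_coe_iff] at this
    exact hfp.not_ge hpu

section Capra

variable {d : ℕ} (N : EuclideanSpace ℝ (Fin d) → ℝ)

@[simp]
theorem radProj_zero : radProj N 0 = 0 := by
  simp [radProj]

theorem radProj_smul_of_pos (hN : ∀ (a : ℝ) (x : EuclideanSpace ℝ (Fin d)), N (a • x) = |a| * N x)
    {l : ℝ} (hl : 0 < l) (x : EuclideanSpace ℝ (Fin d)) : radProj N (l • x) = radProj N x := by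
  by_cases hx : x = 0
  · simp [hx]
  · simp only [radProj, smul_eq_zero, hl.ne', hx, or_self, if_false, hN, abs_of_pos hl, smul_smul,
      mul_inv_rev, inv_mul_cancel_right₀ hl.ne']

theorem continuousAt_radProj (hN : Continuous N) {x : EuclideanSpace ℝ (Fin d)} (hx : x ≠ 0)
    (hNx : N x ≠ 0) : ContinuousAt (radProj N) x := by
  refine ((hN.continuousAt.inv₀ hNx).smul continuousAt_id).congr ?_
  filter_upwards [eventually_ne_nhds hx] with z hz
  simp [radProj, hz]

theorem capraConj_ind (K : Set (EuclideanSpace ℝ (Fin d))) (y : EuclideanSpace ℝ (Fin d)) :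
    capraConj N (ind K) y = ⨆ a ∈ radProj N '' K, ((inner ℝ a y : ℝ) : EReal) := by
  rw [capraConj, iSup_image]
  refine iSup_congr fun x => ?_
  by_cases hx : x ∈ K <;> simp [ind, hx]

theorem capraBiconj_nonpos_iff (f : EuclideanSpace ℝ (Fin d) → EReal)
    (x : EuclideanSpace ℝ (Fin d)) :
    capraBiconj N f x ≤ 0 ↔ ∀ y, ((inner ℝ (radProj N x) y : ℝ) : EReal) ≤ capraConj N f y := by
  simp only [capraBiconj, iSup_le_iff, EReal.sub_nonpos]

variable {N} {K : Set (EuclideanSpace ℝ (Fin d))}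

theorem IsCapraConvex.mem_iff_forall_inner_le (hK : IsCapraConvex N K)
    {x : EuclideanSpace ℝ (Fin d)} :
    x ∈ K ↔ ∀ y, ((inner ℝ (radProj N x) y : ℝ) : EReal) ≤ capraConj N (ind K) y := by
  rw [← capraBiconj_nonpos_iff, ← hK]
  by_cases hx : x ∈ K <;> simp [ind, hx]

theorem IsCapraConvex.mem_iff_radProj_mem (hK : IsCapraConvex N K) {x : EuclideanSpace ℝ (Fin d)} :
    x ∈ K ↔ radProj N x ∈ closure (convexHull ℝ (radProj N '' K)) := by
  simp only [hK.mem_iff_forall_inner_le, mem_closure_convexHull_iff_forall_inner_le_iSup,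
    capraConj_ind]

theorem IsCapraConvex.smul_mem (hK : IsCapraConvex N K)
    (hN : ∀ (a : ℝ) (x : EuclideanSpace ℝ (Fin d)), N (a • x) = |a| * N x) {l : ℝ} (hl : 0 < l)
    {x : EuclideanSpace ℝ (Fin d)} (hx : x ∈ K) : l • x ∈ K := by
  rw [hK.mem_iff_radProj_mem] at hx ⊢
  rwa [radProj_smul_of_pos N hN hl]

theorem IsCapraConvex.isClosed_union_zero (hK : IsCapraConvex N K) (hN : Continuous N)
    (hN0 : ∀ x, N x = 0 → x = 0) : IsClosed (K ∪ {0}) := by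
  refine isClosed_of_closure_subset fun x hx => ?_
  rw [closure_union, closure_singleton] at hx
  by_cases hx0 : x = 0
  · exact Or.inr hx0
  have hρ := continuousAt_radProj N hN hx0 (mt (hN0 x) hx0)
  exact Or.inl <| hK.mem_iff_radProj_mem.2 <|
    closure_mono (subset_convexHull ℝ _) (mem_closure_image hρ (hx.resolve_right hx0))

end Capra

theorem stmt {d : ℕ} (N : EuclideanSpace ℝ (Fin d) → ℝ)
    (hN0 : ∀ x : EuclideanSpace ℝ (Fin d), N x = 0 ↔ x = 0)
    (hNh : ∀ (a : ℝ) (x : EuclideanSpace ℝ (Fin d)), N (a • x) = |a| * N x)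
    (hNt : ∀ x y : EuclideanSpace ℝ (Fin d), N (x + y) ≤ N x + N y)
    (K : Set (EuclideanSpace ℝ (Fin d))) (hK : IsCapraConvex N K) :
    (∀ l : ℝ, 0 < l → ∀ x ∈ K, l • x ∈ K) ∧
    IsClosed (K ∪ {0}) ∧
    ((0 : EuclideanSpace ℝ (Fin d)) ∈ K ↔ (0 : EuclideanSpace ℝ (Fin d)) ∈ closure (convexHull ℝ (radProj N '' K))) := by
  have hNcont : Continuous N :=
    (Seminorm.of N hNt fun a x => by rw [hNh, Real.norm_eq_abs]).continuous_of_finiteDimensional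
  refine ⟨fun l hl x hx => hK.smul_mem hNh hl hx,
    hK.isClosed_union_zero hNcont fun x => (hN0 x).1, ?_⟩
  rw [hK.mem_iff_radProj_mem, radProj_zero]
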